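/- arXiv:1002.2054 — 3 statements merged into one kernel-verified Lean document; each statement's English description precedes it below -/
import Mathlib

section
/- Let n, d ≥ 1 and 0 ≤ t ≤ n(d−1) be integers. Then the partial sum ∑_{i=0}^{t} H(n,d,i) equals ∑_{i=0}^{n} (−1)^i · C(n,i) · C₀(t − d·i + n, n), where C₀(a,b) denotes the restricted binomial coefficient which equals C(a,b) when a ≥ b and 0 otherwise. -/
/-- `H n d t`: the number of vectors `(α₁,…,αₙ) ∈ ℕⁿ` with `∑ αᵢ = t` and
`0 ≤ αᵢ ≤ d−1` for all `i`. -/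
def polyCoeff (n d t : ℕ) : ℕ :=
  ((Finset.univ : Finset (Fin n → Fin d)).filter (fun α => ∑ i, (α i : ℕ) = t)).card

/-- Restricted binomial coefficient: `C₀(a,b) = C(a,b)` when `a ≥ b`, and `0` otherwise. -/
def C0 (a : ℤ) (b : ℕ) : ℤ := if (b : ℤ) ≤ a then ((a.toNat).choose b : ℤ) else 0

/-!
The numbers `H(n,d,t)` are the coefficients of `(1 + X + ⋯ + X^(d-1))^n = (1 - X^d)^n / (1 - X)^n`,
and multiplying a power series by `1 / (1 - X)` turns its coefficients into their partial sums.
So the left-hand side is the coefficient of `X^t` in `(1 - X^d)^n / (1 - X)^(n+1)`; expanding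
`(1 - X^d)^n` by the binomial theorem and using `1 / (1 - X)^(n+1) = ∑ₖ C(n+k, n) Xᵏ` gives the
right-hand side.
-/

open Finset PowerSeries

theorem coeff_geom_sum_pow_eq_polyCoeff {R : Type*} [CommSemiring R] (n d t : ℕ) :
    coeff t ((∑ j ∈ range d, X ^ j : R⟦X⟧) ^ n) = polyCoeff n d t := by
  rw [← Fin.sum_univ_eq_sum_range, ← Fin.prod_const, Fintype.prod_sum]
  simp only [prod_pow_eq_pow_sum, map_sum, coeff_X_pow, sum_boole, polyCoeff, eq_comm]

theorem coeff_mul_mk_one {R : Type*} [Semiring R] (f : R⟦X⟧) (t : ℕ) :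
    coeff t (f * PowerSeries.mk 1) = ∑ i ∈ range (t + 1), coeff i f := by
  simp [coeff_mul, Nat.sum_antidiagonal_eq_sum_range_succ_mk]

section CommRing

variable {R : Type*} [CommRing R]

theorem geom_sum_pow_mul_mk_one (n d : ℕ) :
    (∑ j ∈ range d, X ^ j : R⟦X⟧) ^ n * PowerSeries.mk 1 =
      (1 - X ^ d) ^ n * PowerSeries.mk fun k => ((n + k).choose n : R) := by
  have h : (PowerSeries.mk 1 : R⟦X⟧) =
      (1 - X) ^ n * PowerSeries.mk fun k => ((n + k).choose n : R) := by
    rw [← invOneSubPow_val_succ_eq_mk_add_choose, add_comm,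
      one_sub_pow_mul_invOneSubPow_val_add_eq_invOneSubPow_val]
    ext k
    simp [invOneSubPow_val_succ_eq_mk_add_choose]
  rw [h, ← mul_assoc, ← mul_pow, geom_sum_mul_neg]

theorem coeff_one_sub_X_pow_pow_mul_mk_choose (n d t : ℕ) :
    coeff t ((1 - X ^ d) ^ n * PowerSeries.mk fun k => ((n + k).choose n : R)) =
      ∑ i ∈ range (n + 1),
        (-1) ^ i * n.choose i * if d * i ≤ t then ((t - d * i + n).choose n : R) else 0 := by
  rw [sub_eq_neg_add, add_pow, sum_mul, map_sum]
  refine sum_congr rfl fun i _ => ?_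
  have hterm : (-X ^ d : R⟦X⟧) ^ i * 1 ^ (n - i) * (n.choose i : R⟦X⟧) =
      C ((-1) ^ i * n.choose i : R) * X ^ (d * i) := by
    rw [neg_pow, ← pow_mul, one_pow, mul_one, map_mul, map_pow, map_neg, map_one, map_natCast]
    ring
  rw [hterm, mul_assoc, coeff_C_mul, coeff_X_pow_mul', coeff_mk, add_comm n]

end CommRing

theorem C0_natCast_sub_add (t k n : ℕ) :
    C0 ((t : ℤ) - k + n) n = if k ≤ t then ((t - k + n).choose n : ℤ) else 0 := by
  unfold C0
  split_ifs
  · congr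
    omega
  · omega
  · omega
  · rfl

theorem sum_polyCoeff_eq_general (n d t : ℕ) :
    (∑ i ∈ Finset.range (t + 1), (polyCoeff n d i : ℤ)) =
      ∑ i ∈ Finset.range (n + 1),
        (-1) ^ i * (n.choose i : ℤ) * C0 ((t : ℤ) - d * i + n) n := by
  calc (∑ i ∈ range (t + 1), (polyCoeff n d i : ℤ))
      = coeff t ((∑ j ∈ range d, X ^ j : ℤ⟦X⟧) ^ n * PowerSeries.mk 1) := by
        simp only [coeff_mul_mk_one, coeff_geom_sum_pow_eq_polyCoeff]
    _ = coeff t ((1 - X ^ d) ^ n * PowerSeries.mk fun k => ((n + k).choose n : ℤ)) := by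
        rw [geom_sum_pow_mul_mk_one]
    _ = _ := by
        rw [coeff_one_sub_X_pow_pow_mul_mk_choose]
        refine sum_congr rfl fun i _ => ?_
        rw [← C0_natCast_sub_add, Nat.cast_mul]

theorem sum_polyCoeff_eq (n d t : ℕ) (hn : 1 ≤ n) (hd : 1 ≤ d) (ht : t ≤ n * (d - 1)) :
    (∑ i ∈ Finset.range (t + 1), (polyCoeff n d i : ℤ)) =
      ∑ i ∈ Finset.range (n + 1),
        (-1) ^ i * (n.choose i : ℤ) * C0 ((t : ℤ) - d * i + n) n :=
  sum_polyCoeff_eq_general n d t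
end

section
/- Let n ≥ 1 and 0 ≤ t ≤ n be integers. Then I_n(t) = C(n+t−1, t) + ∑_{j≥1} (−1)^j · C(n + t − u_j − j − 1, t − u_j − j) + ∑_{j≥1} (−1)^j · C(n + t − u_j − 1, t − u_j), where u_j = j(3j−1)/2 is the j-th pentagonal number and binomial coefficients C(a,b) with b < 0 are interpreted as 0 (so both sums are finite). -/
/-- The number of inversions of a permutation of `Fin n`. -/
def invCount {n : ℕ} (π : Equiv.Perm (Fin n)) : ℕ :=
  ((Finset.univ : Finset (Fin n × Fin n)).filter
    (fun p => p.1 < p.2 ∧ π p.2 < π p.1)).card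

/-- `I n t`: the number of permutations of `{1,…,n}` with exactly `t` inversions. -/
def invNum (n t : ℕ) : ℕ :=
  ((Finset.univ : Finset (Equiv.Perm (Fin n))).filter (fun π => invCount π = t)).card

/-- The `j`-th pentagonal number `u_j = j(3j−1)/2`. -/
def pent (j : ℕ) : ℕ := j * (3 * j - 1) / 2

/-- Binomial coefficient `C(a,b)` for integer arguments, interpreted as `0` when `b < 0`
(and in general `0` unless `0 ≤ b ≤ a`). -/
def Cb (a b : ℤ) : ℤ :=
  if 0 ≤ b then ((a.toNat).choose b.toNat : ℤ) else 0

/-!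
Inserting the largest value at position `p` into a permutation of `Fin n` creates `n - p` new
inversions, so the inversion generating function is
`∏_{k<n} (1 + X + ⋯ + X^k) = ∏_{k<n} (1 - X^(k+1)) · (1 - X)^(-n)`.
For `t ≤ n` the coefficients of `∏_{k<n} (1 - X^(k+1))` up to `X^t` are those of Euler's infinite
product, which by the pentagonal number theorem is `∑_{k ∈ ℤ} (-1)^k X^(k(3k-1)/2)`. Multiplying by
`(1 - X)^(-n) = ∑_m C(n+m-1, m) X^m` and reading off the coefficient of `X^t` gives the formula:
`k = j` and `k = -j` contribute the exponents `u_j` and `u_j + j`.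
-/

open Finset Equiv PowerSeries Filter

namespace Fin

variable {n : ℕ}

/-- Inserting the largest value `last n` at position `p` into the one-line notation of `e`. -/
def insertLast (e : Perm (Fin n)) (p : Fin (n + 1)) : Perm (Fin (n + 1)) :=
  (finSuccEquiv' p).trans ((optionCongr e).trans (finSuccEquiv' (last n)).symm)

@[simp]
lemma insertLast_apply_self (e : Perm (Fin n)) (p : Fin (n + 1)) : insertLast e p p = last n := by
  simp [insertLast]

@[simp]
lemma insertLast_apply_succAbove (e : Perm (Fin n)) (p : Fin (n + 1)) (j : Fin n) :
    insertLast e p (p.succAbove j) = (e j).castSucc := by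
  simp [insertLast]

lemma insertLast_injective :
    Function.Injective fun x : Perm (Fin n) × Fin (n + 1) => insertLast x.1 x.2 := by
  rintro ⟨e, p⟩ ⟨e', p'⟩ h
  simp only at h
  have hp : p = p' := by
    by_contra hne
    obtain ⟨j, rfl⟩ := exists_succAbove_eq hne
    simpa using (congrArg (· (p'.succAbove j)) h).symm
  subst hp
  refine Prod.ext (Equiv.ext fun j => castSucc_injective _ ?_) rfl
  simpa using congrArg (· (p.succAbove j)) h

lemma insertLast_bijective :
    Function.Bijective fun x : Perm (Fin n) × Fin (n + 1) => insertLast x.1 x.2 := by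
  rw [Fintype.bijective_iff_injective_and_card]
  refine ⟨insertLast_injective, ?_⟩
  simp [Fintype.card_perm, Nat.factorial_succ, mul_comm]

lemma card_filter_lt (p : Fin (n + 1)) : #{b | p < b} = n - p := by
  rw [filter_lt_eq_Ioi, card_Ioi]
  simp

end Fin

lemma invCount_eq_sum {n : ℕ} (σ : Perm (Fin n)) :
    invCount σ = ∑ a, ∑ b, if a < b ∧ σ b < σ a then 1 else 0 := by
  rw [invCount, card_filter]
  exact Fintype.sum_prod_type _

lemma invCount_insertLast {n : ℕ} (e : Perm (Fin n)) (p : Fin (n + 1)) :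
    invCount (Fin.insertLast e p) = invCount e + (n - p) := by
  have row_self :
      ∑ b, (if p < b ∧ Fin.insertLast e p b < Fin.insertLast e p p then 1 else 0) = n - p := by
    rw [← Fin.card_filter_lt p, card_filter]
    refine sum_congr rfl fun b _ => if_congr ?_ rfl rfl
    refine ⟨And.left, fun hb => ⟨hb, ?_⟩⟩
    obtain ⟨j, rfl⟩ := Fin.exists_succAbove_eq hb.ne'
    simp
  have row_succAbove (i : Fin n) :
      ∑ b, (if p.succAbove i < b ∧ Fin.insertLast e p b < Fin.insertLast e p (p.succAbove i)
          then 1 else 0) = ∑ j, if i < j ∧ e j < e i then 1 else 0 := by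
    rw [Fin.sum_univ_succAbove _ p]
    simp [(Fin.castSucc_lt_last _).not_gt]
  rw [invCount_eq_sum, Fin.sum_univ_succAbove _ p, row_self, invCount_eq_sum e]
  simp_rw [row_succAbove]
  ring

noncomputable def invGenFun (n : ℕ) : ℤ⟦X⟧ :=
  ∑ σ : Perm (Fin n), X ^ invCount σ

lemma coeff_invGenFun (n t : ℕ) : coeff t (invGenFun n) = invNum n t := by
  simp [invGenFun, coeff_X_pow, invNum, eq_comm]

lemma invGenFun_succ (n : ℕ) :
    invGenFun (n + 1) = invGenFun n * ∑ i ∈ range (n + 1), X ^ i := by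
  have hgeom : ∑ p : Fin (n + 1), (X : ℤ⟦X⟧) ^ (n - p) = ∑ i ∈ range (n + 1), X ^ i := by
    rw [Fin.sum_univ_eq_sum_range (fun i => (X : ℤ⟦X⟧) ^ (n - i)), ← sum_range_reflect]
    exact sum_congr rfl fun i hi => by
      rw [Nat.add_sub_cancel, Nat.sub_sub_self (mem_range_succ_iff.mp hi)]
  rw [invGenFun, ← Fin.insertLast_bijective.sum_comp, Fintype.sum_prod_type, invGenFun, sum_mul,
    ← hgeom]
  simp_rw [mul_sum, invCount_insertLast, pow_add]

lemma invGenFun_eq_prod (n : ℕ) :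
    invGenFun n = ∏ k ∈ range n, ∑ i ∈ range (k + 1), X ^ i := by
  induction n with
  | zero => simp [invGenFun, invCount]
  | succ n ih => rw [invGenFun_succ, ih, prod_range_succ]

lemma invGenFun_eq_mul_invOneSubPow (n : ℕ) :
    invGenFun n = (∏ k ∈ range n, (1 - X ^ (k + 1))) * (invOneSubPow ℤ n).val := by
  have hgeom : (∏ k ∈ range n, (1 - X ^ (k + 1) : ℤ⟦X⟧)) = invGenFun n * (1 - X) ^ n := by
    simp_rw [← geom_sum_mul_neg, ← prod_mul_pow_card, card_range, invGenFun_eq_prod]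
  rw [hgeom, ← invOneSubPow_inv_eq_one_sub_pow, mul_assoc, Units.inv_val, mul_one]

lemma natAbs_le_pentagonal (k : ℤ) : k.natAbs ≤ pentagonal k := by
  have h := two_mul_natCast_pentagonal k
  zify
  rcases abs_cases k with ⟨hk, _⟩ | ⟨hk, _⟩ <;> rw [hk] <;> nlinarith

namespace PowerSeries

variable {R : Type*} [CommRing R]

lemma coeff_eq_of_X_pow_dvd_sub {A B : R⟦X⟧} {m i : ℕ} (h : X ^ m ∣ A - B) (hi : i < m) :
    coeff i A = coeff i B := by
  rw [← sub_eq_zero, ← map_sub]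
  exact X_pow_dvd_iff.mp h i hi

lemma X_pow_dvd_prod_one_sub_X_pow_sub_one {s : Finset ℕ} {m : ℕ} (hs : ∀ k ∈ s, m ≤ k) :
    (X : R⟦X⟧) ^ (m + 1) ∣ ∏ k ∈ s, (1 - X ^ (k + 1)) - 1 := by
  rw [← Ideal.mem_span_singleton, ← Ideal.Quotient.eq, map_prod, map_one]
  refine prod_eq_one fun k hk => Ideal.Quotient.eq.mpr (Ideal.mem_span_singleton.mpr ?_)
  simpa using (pow_dvd_pow (X : R⟦X⟧) (Nat.succ_le_succ (hs k hk))).neg_right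

lemma X_pow_dvd_prod_range_sub_pentagonalSeries {n t : ℕ} (ht : t ≤ n) :
    (X : R⟦X⟧) ^ (t + 1) ∣ ∏ k ∈ range n, (1 - X ^ (k + 1)) - pentagonalSeries R := by
  refine X_pow_dvd_iff.mpr fun i hi => ?_
  obtain ⟨s, hs, hrange⟩ :=
    ((coeff_prod_one_sub_X_pow_eventually_eq R i).and (eventually_ge_atTop (range n))).exists
  rw [map_sub, sub_eq_zero, ← hs, ← prod_sdiff hrange, mul_comm]
  refine (coeff_eq_of_X_pow_dvd_sub (m := n + 1) ?_ (by omega)).symm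
  rw [← mul_sub_one]
  exact dvd_mul_of_dvd_right (X_pow_dvd_prod_one_sub_X_pow_sub_one fun k hk =>
    not_lt.mp (mem_range.not.mp (mem_sdiff.mp hk).2)) _

variable (R) in
noncomputable def pentagonalTrunc (t : ℕ) : R⟦X⟧ :=
  ∑ k ∈ Icc (-t : ℤ) t, (k.negOnePow : ℤ) • X ^ pentagonal k

lemma X_pow_dvd_pentagonalSeries_sub_pentagonalTrunc (t : ℕ) :
    (X : R⟦X⟧) ^ (t + 1) ∣ pentagonalSeries R - pentagonalTrunc R t := by
  refine X_pow_dvd_iff.mpr fun i hi => ?_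
  rw [map_sub, sub_eq_zero, pentagonalTrunc, map_sum]
  simp_rw [map_zsmul, coeff_X_pow]
  by_cases h : ∃ k, pentagonal k = i
  · obtain ⟨k, rfl⟩ := h
    rw [coeff_pentagonalSeries_pentagonal, sum_eq_single k]
    · simp
    · intro k' _ hk'
      simp [pentagonal_inj, Ne.symm hk']
    · intro hk
      have := natAbs_le_pentagonal k
      exact absurd (mem_Icc.mpr ⟨by omega, by omega⟩) hk
  · rw [coeff_pentagonalSeries_eq_zero R (by simpa using h)]
    refine (sum_eq_zero fun k _ => ?_).symm
    rw [if_neg fun hk => h ⟨k, hk.symm⟩, smul_zero]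

end PowerSeries

lemma pentagonal_natCast (j : ℕ) : pentagonal j = pent j := by
  rcases Nat.eq_zero_or_pos j with rfl | hj
  · rfl
  · zify
    rw [natCast_pentagonal, pent, Int.natCast_div, Nat.cast_mul, Nat.cast_sub (by omega)]
    push_cast
    rfl

lemma pentagonal_neg_natCast (j : ℕ) : pentagonal (-j) = pent j + j := by
  have hneg := two_mul_natCast_pentagonal_neg j
  have hpos := two_mul_natCast_pentagonal j
  rw [pentagonal_natCast] at hpos
  zify
  linarith

lemma sum_Icc_neg_natCast {M : Type*} [AddCommMonoid M] (f : ℤ → M) (t : ℕ) :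
    ∑ k ∈ Icc (-t : ℤ) t, f k = f 0 + ∑ j ∈ Icc 1 t, (f j + f (-j)) := by
  induction t with
  | zero => simp
  | succ t ih =>
    have hIcc : Icc (-(t + 1 : ℕ) : ℤ) (t + 1 : ℕ) =
        insert ((t + 1 : ℕ) : ℤ) (insert (-(t + 1 : ℕ) : ℤ) (Icc (-t : ℤ) t)) := by
      ext k; simp; omega
    rw [hIcc, sum_insert (by simp; omega), sum_insert (by simp), ih, sum_Icc_succ_top (by omega)]
    abel

lemma coeff_X_pow_mul_invOneSubPow {n : ℕ} (hn : 0 < n) (p t : ℕ) :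
    coeff t (X ^ p * (invOneSubPow ℤ n).val) = Cb (n + t - p - 1) (t - p) := by
  rw [coeff_X_pow_mul', invOneSubPow_val_eq_mk_sub_one_add_choose_of_pos _ _ hn, coeff_mk, Cb]
  split_ifs
  · have ha : ((n : ℤ) + t - p - 1).toNat = n - 1 + (t - p) := by omega
    have hb : ((t : ℤ) - p).toNat = t - p := by omega
    rw [ha, hb, Nat.choose_symm_add]
  · omega
  · omega
  · rfl

lemma invNum_eq_sum_pentagonal {n t : ℕ} (hn : 1 ≤ n) (ht : t ≤ n) :
    (invNum n t : ℤ) =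
      ∑ k ∈ Icc (-t : ℤ) t,
        (k.negOnePow : ℤ) * Cb (n + t - pentagonal k - 1) (t - pentagonal k) := by
  have htrunc : (X : ℤ⟦X⟧) ^ (t + 1) ∣
      (∏ k ∈ range n, (1 - X ^ (k + 1)) - pentagonalTrunc ℤ t) * (invOneSubPow ℤ n).val :=
    dvd_mul_of_dvd_left (by
      simpa using dvd_add (X_pow_dvd_prod_range_sub_pentagonalSeries ht)
        (X_pow_dvd_pentagonalSeries_sub_pentagonalTrunc (R := ℤ) t)) _
  rw [← coeff_invGenFun, invGenFun_eq_mul_invOneSubPow,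
    coeff_eq_of_X_pow_dvd_sub (by rwa [← sub_mul]) (Nat.lt_succ_self t), pentagonalTrunc, sum_mul,
    map_sum]
  simp_rw [smul_mul_assoc, map_zsmul, coeff_X_pow_mul_invOneSubPow hn, smul_eq_mul]

/-- Since `u_j ≥ j`, the terms with `j > t` have a negative lower binomial argument and vanish,
so the sums `∑_{j ≥ 1}` are taken over `1 ≤ j ≤ t`. -/
theorem invNum_pentagonal (n t : ℕ) (hn : 1 ≤ n) (ht : t ≤ n) :
    (invNum n t : ℤ) =
      ((n + t - 1).choose t : ℤ) +
        (∑ j ∈ Finset.Icc 1 t,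
          (-1) ^ j * Cb ((n : ℤ) + t - pent j - j - 1) ((t : ℤ) - pent j - j)) +
        (∑ j ∈ Finset.Icc 1 t,
          (-1) ^ j * Cb ((n : ℤ) + t - pent j - 1) ((t : ℤ) - pent j)) := by
  have hzero : Cb ((n : ℤ) + t - pentagonal 0 - 1) (t - pentagonal 0) = (n + t - 1).choose t := by
    have hp : pentagonal 0 = 0 := rfl
    have ha : ((n : ℤ) + t - 1).toNat = n + t - 1 := by omega
    rw [hp, Nat.cast_zero, sub_zero, sub_zero, Cb, if_pos (by simp), ha, Int.toNat_natCast]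
  rw [invNum_eq_sum_pentagonal hn ht, sum_Icc_neg_natCast, sum_add_distrib, hzero]
  simp only [pentagonal_natCast, pentagonal_neg_natCast, Int.negOnePow_neg, Int.negOnePow_zero,
    Int.coe_negOnePow_natCast, Units.val_one, one_mul, Nat.cast_add, sub_add_eq_sub_sub]
  abel
end

section
/- Let n ≥ 1 be an integer, let p₁ < p₂ < … < p_{n−1} be distinct primes, and set k = p₁¹ · p₂² · … · p_{n−1}^{n−1}. Then for every integer 0 ≤ t ≤ C(n,2), the number of divisors d of k with Ω(d) = t (where Ω counts prime factors with multiplicity) equals I_n(t). -/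
/-!
Both numbers are the coefficient of `X ^ t` in the `q`-factorial `[1]_q [2]_q ⋯ [n]_q`, where
`[k]_q = 1 + X + ⋯ + X ^ (k - 1)`.

A permutation of `Fin (n + 1)` is determined by its value `p` at `0` and the permutation `σ` of
`Fin n` it induces on the remaining positions and values; the inversions starting at `0` are the
`p` smaller values further right, so the inversion polynomial gains the factor `[n + 1]_q`.

On the divisor side `d ↦ X ^ Ω d` is completely multiplicative, so `k ↦ ∑_{d ∣ k} X ^ Ω d` is
multiplicative and takes the value `[e + 1]_q` at a prime power `p ^ e`.
-/

open Finset Polynomial ArithmeticFunction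
open scoped ArithmeticFunction.Omega ArithmeticFunction.zeta

noncomputable def qNat (k : ℕ) : ℕ[X] := ∑ j ∈ range k, X ^ j

lemma coeff_sum_X_pow {α : Type*} (s : Finset α) (w : α → ℕ) (t : ℕ) :
    (∑ x ∈ s, (X : ℕ[X]) ^ w x).coeff t = #{x ∈ s | w x = t} := by
  simp only [finsetSum_coeff, coeff_X_pow, sum_boole, Nat.cast_id, eq_comm]

section consPerm

variable {n : ℕ}

noncomputable def consPerm (p : Fin (n + 1)) (σ : Equiv.Perm (Fin n)) :
    Equiv.Perm (Fin (n + 1)) :=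
  Equiv.ofBijective (Fin.cons p fun i => p.succAbove (σ i) : Fin (n + 1) → Fin (n + 1)) <|
    Finite.injective_iff_bijective.mp <| Fin.cons_injective_iff.mpr
      ⟨fun ⟨i, hi⟩ => Fin.succAbove_ne p (σ i) hi,
        Fin.succAbove_right_injective.comp σ.injective⟩

@[simp] lemma consPerm_zero (p : Fin (n + 1)) (σ : Equiv.Perm (Fin n)) : consPerm p σ 0 = p := by
  simp [consPerm]

@[simp] lemma consPerm_succ (p : Fin (n + 1)) (σ : Equiv.Perm (Fin n)) (i : Fin n) :
    consPerm p σ i.succ = p.succAbove (σ i) := by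
  simp [consPerm]

lemma uncurry_consPerm_bijective : Function.Bijective (Function.uncurry (consPerm (n := n))) := by
  refine (Fintype.bijective_iff_injective_and_card _).mpr ⟨?_, ?_⟩
  · rintro ⟨p, σ⟩ ⟨q, τ⟩ h
    obtain rfl : p = q := by simpa using congr($h 0)
    obtain rfl : σ = τ := Equiv.ext fun i => by simpa using congr($h i.succ)
    rfl
  · simp [Fintype.card_perm, Nat.factorial_succ]

lemma invCount_eq_sum_s14 (π : Equiv.Perm (Fin n)) :
    invCount π = ∑ i, #{j | i < j ∧ π j < π i} := by
  rw [invCount, card_filter, Fintype.sum_prod_type]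
  simp only [card_filter]

lemma invCount_consPerm (p : Fin (n + 1)) (σ : Equiv.Perm (Fin n)) :
    invCount (consPerm p σ) = p + invCount σ := by
  have inversions_at_zero : #{j | 0 < j ∧ consPerm p σ j < p} = p := by
    rw [Fin.card_filter_univ_succ]
    simp only [lt_self_iff_false, false_and, if_false, Fin.succ_pos, true_and, consPerm_succ]
    rw [card_equiv σ (t := {x : Fin n | (x : ℕ) < p})
      fun i => by simp [Fin.succAbove_lt_iff_castSucc_lt]; rfl, Fin.card_filter_val_lt]
    omega
  have inversions_at_succ (i : Fin n) :
      #{j | i.succ < j ∧ consPerm p σ j < consPerm p σ i.succ} = #{j | i < j ∧ σ j < σ i} := by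
    rw [Fin.card_filter_univ_succ]
    simp [Fin.succAbove_lt_succAbove_iff]
  rw [invCount_eq_sum_s14, invCount_eq_sum_s14, Fin.sum_univ_succ, consPerm_zero, inversions_at_zero]
  simp only [inversions_at_succ]

end consPerm

lemma sum_X_pow_invCount (n : ℕ) :
    ∑ π : Equiv.Perm (Fin n), (X : ℕ[X]) ^ invCount π = ∏ i ∈ range n, qNat (i + 1) := by
  induction n with
  | zero => simp [invCount]
  | succ n ih =>
    rw [← uncurry_consPerm_bijective.sum_comp, Fintype.sum_prod_type]
    simp only [Function.uncurry_apply_pair, invCount_consPerm, pow_add, ← mul_sum, ← sum_mul, ih,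
      prod_range_succ, qNat, Fin.sum_univ_eq_sum_range (fun j => (X : ℕ[X]) ^ j), mul_comm]

lemma invNum_eq_coeff (n t : ℕ) : invNum n t = (∏ i ∈ range n, qNat (i + 1)).coeff t := by
  rw [← sum_X_pow_invCount, coeff_sum_X_pow, invNum]

noncomputable def xPowCardFactors : ArithmeticFunction ℕ[X] :=
  ⟨fun d => if d = 0 then 0 else X ^ Ω d, if_pos rfl⟩

lemma xPowCardFactors_apply {d : ℕ} (hd : d ≠ 0) : xPowCardFactors d = X ^ Ω d := if_neg hd

lemma isMultiplicative_xPowCardFactors : xPowCardFactors.IsMultiplicative := by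
  refine IsMultiplicative.iff_ne_zero.mpr ⟨?_, fun hm hn _ => ?_⟩
  · simp [xPowCardFactors_apply]
  · rw [xPowCardFactors_apply (mul_ne_zero hm hn), xPowCardFactors_apply hm,
      xPowCardFactors_apply hn, cardFactors_mul hm hn, pow_add]

lemma sum_divisors_X_pow_cardFactors_prime_pow {p : ℕ} (hp : p.Prime) (e : ℕ) :
    ∑ d ∈ (p ^ e).divisors, (X : ℕ[X]) ^ Ω d = qNat (e + 1) := by
  simp [Nat.sum_divisors_prime_pow hp, cardFactors_apply_prime_pow hp, qNat]

lemma sum_divisors_X_pow_cardFactors_prod {ι : Type*} [Fintype ι] (p : ι → ℕ)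
    (hp : ∀ i, (p i).Prime) (hinj : p.Injective) (e : ι → ℕ) :
    ∑ d ∈ (∏ i, p i ^ e i).divisors, (X : ℕ[X]) ^ Ω d = ∏ i, qNat (e i + 1) := by
  have hmul := isMultiplicative_zeta.natCast.mul isMultiplicative_xPowCardFactors
  have hsum (m : ℕ) : ∑ d ∈ m.divisors, (X : ℕ[X]) ^ Ω d = (ζ * xPowCardFactors) m := by
    rw [coe_zeta_mul_apply]
    exact sum_congr rfl fun d hd => (xPowCardFactors_apply (Nat.pos_of_mem_divisors hd).ne').symm
  rw [hsum, hmul.map_prod _ _ fun i _ j _ hij =>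
    ((Nat.coprime_primes (hp i) (hp j)).mpr (hinj.ne hij)).pow _ _]
  exact prod_congr rfl fun i _ => by rw [← hsum, sum_divisors_X_pow_cardFactors_prime_pow (hp i)]

theorem card_divisors_bigOmega_eq_invNum_general (n : ℕ)
    (p : Fin (n - 1) → ℕ) (hp : ∀ i, (p i).Prime) (hmono : StrictMono p)
    (t : ℕ) :
    ((∏ i, p i ^ ((i : ℕ) + 1)).divisors.filter
        (fun m => m.primeFactorsList.length = t)).card = invNum n t := by
  have drop_first_factor :
      ∏ i ∈ range n, qNat (i + 1) = ∏ i ∈ range (n - 1), qNat (i + 1 + 1) := by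
    cases n with
    | zero => rfl
    | succ n => simp [prod_range_succ', qNat]
  rw [invNum_eq_coeff, drop_first_factor,
    ← Fin.prod_univ_eq_prod_range (fun i => qNat (i + 1 + 1)),
    ← sum_divisors_X_pow_cardFactors_prod p hp hmono.injective, coeff_sum_X_pow]
  rfl

/-- Rank sizes of the divisor lattice `D_k` for `k = p₁¹ ⋯ p_{n−1}^{n−1}`:
the number of divisors `m` of `k` with `Ω(m) = t` equals `I_n(t)`.
Here `Ω(m) = m.primeFactorsList.length` counts prime factors with multiplicity. -/
theorem card_divisors_bigOmega_eq_invNum (n : ℕ) (hn : 1 ≤ n)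
    (p : Fin (n - 1) → ℕ) (hp : ∀ i, (p i).Prime) (hmono : StrictMono p)
    (t : ℕ) (ht : t ≤ n.choose 2) :
    ((∏ i, p i ^ ((i : ℕ) + 1)).divisors.filter
        (fun m => m.primeFactorsList.length = t)).card = invNum n t :=
  card_divisors_bigOmega_eq_invNum_general n p hp hmono t
end
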